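/- arXiv:math/0411061 — 2 statements merged into one kernel-verified Lean document; each statement's English description precedes it below -/
import Mathlib

section
/- Let n > 4 and let m_1, …, m_n, M_1, …, M_n ∈ SL(2,ℂ). Define the n×n complex matrices B = (B_{i,j})_{1≤i,j≤n} and C = (C_{i,j})_{1≤i,j≤n} by B_{i,j} = −tr(m_i · M_j) and C_{i,j} = tr(m_i · M_j⁻¹). Then det B = 0 and det C = 0. -/
/-!
The matrix `(tr (X_i Y_j))_{i,j}` factors as `A * D` through the `k²` matrix entries, via
`tr (X Y) = ∑_{p,q} X_{pq} Y_{qp}`. Hence its rank is at most `k²`, so it is singular as soon as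
it has more than `k²` rows; for `SL(2,ℂ)` this is `n > 4`.
-/

noncomputable def tr2 (x : Matrix.SpecialLinearGroup (Fin 2) ℂ) : ℂ :=
  Matrix.trace (x : Matrix (Fin 2) (Fin 2) ℂ)

namespace Matrix

variable {ι k R : Type*} [Fintype k]

theorem det_mul_eq_zero_of_card_lt [Fintype ι] [DecidableEq ι] [CommRing R] [IsDomain R] (A : Matrix ι k R)
    (D : Matrix k ι R) (h : Fintype.card k < Fintype.card ι) : (A * D).det = 0 := by
  by_contra hdet
  have hrank : (A * D).rank ≤ Fintype.card k :=
    (rank_mul_le_right A D).trans (rank_le_card_height D)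
  rw [rank_of_det_ne_zero hdet] at hrank
  omega

theorem of_trace_mul_eq_mul [CommSemiring R] (X Y : ι → Matrix k k R) :
    of (fun i j => trace (X i * Y j)) =
      of (fun i (p : k × k) => X i p.1 p.2) * of (fun (p : k × k) j => Y j p.2 p.1) := by
  ext i j
  simp [trace, mul_apply, Fintype.sum_prod_type]

theorem det_of_trace_mul_eq_zero [Fintype ι] [DecidableEq ι] [CommRing R] [IsDomain R] (X Y : ι → Matrix k k R)
    (h : Fintype.card k ^ 2 < Fintype.card ι) :
    (of fun i j => trace (X i * Y j)).det = 0 := by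
  rw [of_trace_mul_eq_mul]
  exact det_mul_eq_zero_of_card_lt _ _ (by simpa [sq] using h)

end Matrix

open Matrix in
/-- **Generalised Magnus Main Lemma, vanishing of `det B` and `det C`.**
Let `n > 4` and `m_1,…,m_n, M_1,…,M_n ∈ SL(2,ℂ)`.  With `B_{i,j} = -tr(m_i M_j)` and
`C_{i,j} = tr(m_i M_j⁻¹)` (`1 ≤ i,j ≤ n`), one has `det B = 0` and `det C = 0`. -/
theorem det_B_eq_zero_and_det_C_eq_zero (n : ℕ) (hn : 4 < n)
    (m M : Fin n → Matrix.SpecialLinearGroup (Fin 2) ℂ) :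
    (Matrix.of fun i j : Fin n => -tr2 (m i * M j)).det = 0 ∧
      (Matrix.of fun i j : Fin n => tr2 (m i * (M j)⁻¹)).det = 0 := by
  have hcard : Fintype.card (Fin 2) ^ 2 < Fintype.card (Fin n) := by simpa using hn
  have hB : (of fun i j : Fin n => -tr2 (m i * M j)) =
      -of fun i j => trace ((m i : Matrix (Fin 2) (Fin 2) ℂ) * (M j : Matrix (Fin 2) (Fin 2) ℂ)) := by
    ext i j
    simp [tr2]
  constructor
  · rw [hB, det_neg, det_of_trace_mul_eq_zero _ _ hcard, mul_zero]
  · exact det_of_trace_mul_eq_zero (fun i => (m i : Matrix (Fin 2) (Fin 2) ℂ))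
      (fun j => ((M j)⁻¹ : SpecialLinearGroup (Fin 2) ℂ)) hcard
end

section
/- Let n ≥ 5, let m_1, …, m_n ∈ SL(2,ℂ), and let ε_1, …, ε_n ∈ {+1, −1}. Then there exists a nonzero vector (v_1, …, v_n) ∈ ℂ^n such that for every M ∈ SL(2,ℂ), Σ_{i=1}^n v_i · tr(m_i · M^{ε_i}) = 0, where M^{ε_i} means M if ε_i = +1 and M⁻¹ if ε_i = −1. -/
theorem Module.exists_ne_zero_sum_smul_eq_zero_of_finrank_lt_card {R M ι : Type*} [Ring R]
    [StrongRankCondition R] [AddCommGroup M] [Module R M] [Module.Finite R M] [Fintype ι]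
    (f : ι → M) (h : Module.finrank R M < Fintype.card ι) :
    ∃ v : ι → R, v ≠ 0 ∧ ∑ i, v i • f i = 0 := by
  obtain ⟨v, hrel, i, hi⟩ :=
    Fintype.not_linearIndependent_iff.mp fun hf => h.not_ge hf.fintype_card_le_finrank
  exact ⟨v, fun hv => hi (congrFun hv i), hrel⟩

namespace Matrix

variable {R : Type*} [CommRing R]

theorem adjugate_fin_two_eq_trace_smul_one_sub (A : Matrix (Fin 2) (Fin 2) R) :
    adjugate A = trace A • 1 - A := by
  ext i j
  fin_cases i <;> fin_cases j <;> simp [adjugate_fin_two, trace_fin_two]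

namespace SpecialLinearGroup

theorem trace_mul_inv_fin_two (m M : SpecialLinearGroup (Fin 2) R) :
    trace (↑(m * M⁻¹) : Matrix (Fin 2) (Fin 2) R) =
      trace (m : Matrix (Fin 2) (Fin 2) R) * trace (M : Matrix (Fin 2) (Fin 2) R) -
        trace (↑(m * M) : Matrix (Fin 2) (Fin 2) R) := by
  rw [coe_mul, coe_inv, adjugate_fin_two_eq_trace_smul_one_sub, mul_sub, mul_smul_comm,
    mul_one, trace_sub, trace_smul, coe_mul, smul_eq_mul, mul_comm]

theorem exists_dual_apply_eq_trace_mul_zpow (m : SpecialLinearGroup (Fin 2) R) {e : ℤ}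
    (he : e = 1 ∨ e = -1) :
    ∃ φ : Module.Dual R (Matrix (Fin 2) (Fin 2) R), ∀ M : SpecialLinearGroup (Fin 2) R,
      φ M = trace (↑(m * M ^ e) : Matrix (Fin 2) (Fin 2) R) := by
  let trMul : Module.Dual R (Matrix (Fin 2) (Fin 2) R) :=
    (traceLinearMap (Fin 2) R R).comp (LinearMap.mulLeft R (m : Matrix (Fin 2) (Fin 2) R))
  rcases he with rfl | rfl
  · exact ⟨trMul, fun M => by simp [trMul]⟩
  · refine ⟨trace (m : Matrix (Fin 2) (Fin 2) R) • traceLinearMap (Fin 2) R R - trMul,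
      fun M => ?_⟩
    rw [_root_.zpow_neg_one, trace_mul_inv_fin_two]
    simp [trMul]

end SpecialLinearGroup

end Matrix

/-- **Key step in the proof of Theorem 2 of the paper.**
Let `n ≥ 5`, `m_1,…,m_n ∈ SL(2,ℂ)` and `ε_1,…,ε_n ∈ {±1}`.  Then there is a nonzero vector
`(v_1,…,v_n) ∈ ℂⁿ` such that `Σ_i v_i ⬝ tr(m_i M^{ε_i}) = 0` for every `M ∈ SL(2,ℂ)`. -/
theorem exists_left_null_vector (n : ℕ) (hn : 5 ≤ n)
    (m : Fin n → Matrix.SpecialLinearGroup (Fin 2) ℂ)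
    (ε : Fin n → ℤ) (hε : ∀ i, ε i = 1 ∨ ε i = -1) :
    ∃ v : Fin n → ℂ, v ≠ 0 ∧
      ∀ M : Matrix.SpecialLinearGroup (Fin 2) ℂ,
        ∑ i, v i * tr2 (m i * M ^ (ε i)) = 0 := by
  choose φ hφ using fun i =>
    Matrix.SpecialLinearGroup.exists_dual_apply_eq_trace_mul_zpow (m i) (hε i)
  have hdim :
      Module.finrank ℂ (Module.Dual ℂ (Matrix (Fin 2) (Fin 2) ℂ)) < Fintype.card (Fin n) := by
    simp only [Subspace.dual_finrank_eq, Module.finrank_matrix, Fintype.card_fin,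
      Module.finrank_self]
    omega
  obtain ⟨v, hv, hrel⟩ := Module.exists_ne_zero_sum_smul_eq_zero_of_finrank_lt_card φ hdim
  refine ⟨v, hv, fun M => ?_⟩
  simpa [tr2, hφ] using LinearMap.congr_fun hrel (M : Matrix (Fin 2) (Fin 2) ℂ)
end
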